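/- In the duplicated gadget construction with ℓ copies x_1, …, x_ℓ of the vertex x, any feasible edge set (one in which every ordered pair (p,q) has a q–p path all of whose vertices lie in the iBGP safe set S(p,q)) has at least ℓ · h* edges, where h* is the minimum size of a hitting set for the instance T_1, …, T_m ⊆ [n]. -/

import Mathlib

/-! Since `d` is the greatest pseudometric below the edge weights, every potential `f` with
`|f p - f q|` below the edge weights satisfies `|f p - f q| ≤ d p q`. Such potentials give the
lower bounds on `d` showing that the safe set `S(x_k, b_j)` lies in `{x_k, b_j} ∪ {a_i : i ∈ T_j}`,
so the last edge of the walk required for `(x_k, b_j)` joins `x_k` to `b_j` or to some `a_i` with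
`i ∈ T_j`. Label an edge `x_k a_i` by `(k, i)` and an edge `x_k b_j` by `(k, c_j)` for a fixed
`c_j ∈ T_j`: for each `k` the second coordinates of the labels `(k, ·)` form a hitting set, so at
least `h*` labels start with `k`, and as every edge has at most one label, `|E| ≥ ℓ · h*`. -/

/-- The vertices of the duplicated hitting-set gadget: `ℓ` copies `x k` of the
vertex `x`, dummy nodes `z`, `y`, `u`, `h`, element nodes `a i` for `i ∈ [n]`
and set nodes `b j` for `j ∈ [m]`. -/
inductive GV (L n m : ℕ) : Type
  | x : Fin L → GV L n m
  | z : GV L n m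
  | y : GV L n m
  | u : GV L n m
  | h : GV L n m
  | a : Fin n → GV L n m
  | b : Fin m → GV L n m
deriving DecidableEq

/-- `d` is a pseudometric (reflexive, symmetric, triangle inequality). -/
def IsPseudoMetric {α : Type*} (d : α → α → ℝ) : Prop :=
  (∀ p, d p p = 0) ∧ (∀ p q, d p q = d q p) ∧ (∀ p q r, d p r ≤ d p q + d q r)

/-- `d` is bounded above by the prescribed edge weights of the duplicated gadget
(indices are 1-based, via `·.val + 1`). -/
def GadgetEdgeBounds {L n m : ℕ} (T : Fin m → Finset (Fin n)) (ε : ℝ)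
    (d : GV L n m → GV L n m → ℝ) : Prop :=
  (∀ k : Fin L, d (GV.x k) GV.z ≤ 20 + (k.val + 1) * ε) ∧
  (∀ k : Fin L, ∀ j : Fin m,
    d (GV.x k) (GV.b j) ≤ 20 + 1.4 + ((k.val + 1) + (j.val + 1)) * ε) ∧
  d GV.z GV.y ≤ 1.5 ∧
  (∀ i : Fin n, d GV.z (GV.a i) ≤ 1 + (i.val + 1) * ε) ∧
  d GV.z GV.u ≤ 2 ∧
  (∀ i : Fin n, d (GV.a i) GV.u ≤ 1.1) ∧
  (∀ i : Fin n, ∀ j : Fin m, i ∈ T j →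
    d (GV.a i) (GV.b j) ≤ 1 + ((i.val + 1) + (j.val + 1)) * ε) ∧
  (∀ j : Fin m, d (GV.b j) GV.h ≤ 1 + (j.val + 1) * ε)

/-- `d` is the shortest-path metric of the duplicated gadget graph: it is the
pointwise greatest pseudometric bounded above by the gadget edge weights. -/
def IsGadgetSPMetric {L n m : ℕ} (T : Fin m → Finset (Fin n)) (ε : ℝ)
    (d : GV L n m → GV L n m → ℝ) : Prop :=
  IsPseudoMetric d ∧ GadgetEdgeBounds T ε d ∧
  ∀ d' : GV L n m → GV L n m → ℝ, IsPseudoMetric d' → GadgetEdgeBounds T ε d' →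
    ∀ p q, d' p q ≤ d p q

/-- The iBGP safe set of the ordered pair `(p,q)` for the metric `d`. -/
def iBGPSafeSet {α : Type*} (d : α → α → ℝ) (p q : α) : Set α :=
  {w | ∀ r, d p q < d p r → d w q < d w r} ∪ {q}

/-- `E` is a correct iBGP signaling graph: every ordered pair `(p,q)` has a
path from `q` to `p` all of whose vertices lie in the safe set `S(p,q)`. -/
def iBGPFeasible {α : Type*} (d : α → α → ℝ) (E : Set (Sym2 α)) : Prop :=
  ∀ p q : α, ∃ w : (SimpleGraph.fromEdgeSet E).Walk q p,
    ∀ v ∈ w.support, v ∈ iBGPSafeSet d p q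

/-- `Hs` is a hitting set for the instance `T`. -/
def IsHittingSet {n m : ℕ} (T : Fin m → Finset (Fin n)) (Hs : Finset (Fin n)) : Prop :=
  ∀ j : Fin m, ∃ i ∈ Hs, i ∈ T j


lemma IsPseudoMetric.nonneg {α : Type*} {d : α → α → ℝ} (hd : IsPseudoMetric d) (p q : α) :
    0 ≤ d p q := by
  have := hd.2.2 p q p
  rw [hd.1, hd.2.1 q p] at this
  linarith

lemma lt_of_mem_iBGPSafeSet {α : Type*} {d : α → α → ℝ} {p q w : α}
    (hw : w ∈ iBGPSafeSet d p q) (hwq : w ≠ q) {r : α} (hr : d p q < d p r) : d w q < d w r := by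
  rcases hw with hw | hw
  · exact hw r hr
  · exact absurd hw hwq

section Gadget

variable {L n m : ℕ} {T : Fin m → Finset (Fin n)} {ε : ℝ} {d : GV L n m → GV L n m → ℝ}

lemma GadgetEdgeBounds.mono {ε' : ℝ} (hd : GadgetEdgeBounds T ε d) (hε : ε ≤ ε') :
    GadgetEdgeBounds T ε' d := by
  obtain ⟨h1, h2, h3, h4, h5, h6, h7, h8⟩ := hd
  refine ⟨fun k => (h1 k).trans ?_, fun k j => (h2 k j).trans ?_, h3, fun i => (h4 i).trans ?_,
    h5, h6, fun i j hij => (h7 i j hij).trans ?_, fun j => (h8 j).trans ?_⟩ <;>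
  gcongr

lemma IsGadgetSPMetric.abs_sub_le (hd : IsGadgetSPMetric T ε d) (hε : 0 ≤ ε)
    {f : GV L n m → ℝ} (hf : GadgetEdgeBounds T 0 fun p q => |f p - f q|) (p q : GV L n m) :
    |f p - f q| ≤ d p q :=
  hd.2.2 (fun p q => |f p - f q|)
    ⟨fun _ => by simp, fun p q => abs_sub_comm (f p) (f q),
      fun p q r => _root_.abs_sub_le (f p) (f q) (f r)⟩
    (hf.mono hε) p q

-- `potX k`, `potY`, `potA i j` (for `i ∉ T j`) and `potB j` bound from below the distances
-- from `x k`, `y`, `a i` and `b j` respectively.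
def potX (k : Fin L) : GV L n m → ℝ
  | .x k' => if k' = k then 0 else 40
  | .z => 20 | .y => 21.5 | .u => 22 | .h => 22.4 | .a _ => 21 | .b _ => 21.4

def potY : GV L n m → ℝ
  | .x _ => 21.5 | .z => 1.5 | .y => 0 | .u => 3.5 | .h => 3.5 | .a _ => 2.5 | .b _ => 3.5

def potA (i : Fin n) (j : Fin m) : GV L n m → ℝ
  | .x _ => 21 | .z => 1 | .y => 1 | .u => 1.1 | .h => 2
  | .a i' => if i' = i then 0 else 1
  | .b j' => if j' = j then 1.1 else 1

def potB (j : Fin m) : GV L n m → ℝ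
  | .x _ => 21.4 | .z => 2 | .y => 2 | .u => 2 | .h => 1 | .a _ => 1
  | .b j' => if j' = j then 0 else 2

lemma potX_bounds (k : Fin L) :
    GadgetEdgeBounds T 0 fun p q => |potX (n := n) (m := m) k p - potX k q| := by
  refine ⟨?_, ?_, ?_, ?_, ?_, ?_, ?_, ?_⟩ <;> intros <;> simp only [potX] <;> (try split_ifs) <;>
    norm_num [abs_le]

lemma potY_bounds :
    GadgetEdgeBounds T 0 fun p q => |potY (L := L) (n := n) (m := m) p - potY q| := by
  refine ⟨?_, ?_, ?_, ?_, ?_, ?_, ?_, ?_⟩ <;> intros <;> simp only [potY] <;> norm_num [abs_le]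

lemma potA_bounds {i : Fin n} {j : Fin m} (hij : i ∉ T j) :
    GadgetEdgeBounds T 0 fun p q => |potA (L := L) i j p - potA i j q| := by
  refine ⟨?_, ?_, ?_, ?_, ?_, ?_, ?_, ?_⟩ <;> intros <;> simp only [potA] <;> (try split_ifs) <;>
    subst_vars <;> first | contradiction | norm_num [abs_le]

lemma potB_bounds (j : Fin m) :
    GadgetEdgeBounds T 0 fun p q => |potB (L := L) (n := n) j p - potB j q| := by
  refine ⟨?_, ?_, ?_, ?_, ?_, ?_, ?_, ?_⟩ <;> intros <;> simp only [potB] <;> (try split_ifs) <;>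
    norm_num [abs_le]

lemma le_dist_x_u (hd : IsGadgetSPMetric T ε d) (hε : 0 ≤ ε) (k : Fin L) :
    22 ≤ d (.x k) .u := by
  simpa [potX] using hd.abs_sub_le hε (potX_bounds k) (.x k) .u

lemma le_dist_x_h (hd : IsGadgetSPMetric T ε d) (hε : 0 ≤ ε) (k : Fin L) :
    22.4 ≤ d (.x k) .h := by
  have := hd.abs_sub_le hε (potX_bounds k) (.x k) .h
  norm_num [potX] at this ⊢
  exact this

lemma le_dist_x_x (hd : IsGadgetSPMetric T ε d) (hε : 0 ≤ ε) {k k' : Fin L} (hk : k' ≠ k) :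
    40 ≤ d (.x k) (.x k') := by
  simpa [potX, hk] using hd.abs_sub_le hε (potX_bounds k) (.x k) (.x k')

lemma le_dist_z_b (hd : IsGadgetSPMetric T ε d) (hε : 0 ≤ ε) (j : Fin m) :
    2 ≤ d .z (.b j) := by
  have := hd.abs_sub_le hε potY_bounds .z (.b j)
  norm_num [potY] at this
  exact this

lemma le_dist_y_b (hd : IsGadgetSPMetric T ε d) (hε : 0 ≤ ε) (j : Fin m) :
    3.5 ≤ d .y (.b j) := by
  have := hd.abs_sub_le hε potY_bounds .y (.b j)
  norm_num [potY] at this ⊢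
  exact this

lemma le_dist_a_b (hd : IsGadgetSPMetric T ε d) (hε : 0 ≤ ε) {i : Fin n} {j : Fin m}
    (hij : i ∉ T j) : 1.1 ≤ d (.a i) (.b j) := by
  have := hd.abs_sub_le hε (potA_bounds hij) (.a i) (.b j)
  norm_num [potA] at this ⊢
  exact this

lemma le_dist_b_b (hd : IsGadgetSPMetric T ε d) (hε : 0 ≤ ε) {j j' : Fin m} (hj : j' ≠ j) :
    2 ≤ d (.b j') (.b j) := by
  simpa [potB, hj.symm] using hd.abs_sub_le hε (potB_bounds j') (.b j') (.b j)


lemma mem_iBGPSafeSet_x_b (hd : IsGadgetSPMetric T ε d) (hε : 0 ≤ ε)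
    (hsmall : ((L : ℝ) + m) * ε < 1 / 2) {k : Fin L} {j : Fin m} {w : GV L n m}
    (hw : w ∈ iBGPSafeSet d (.x k) (.b j)) : w = .x k ∨ w = .b j ∨ ∃ i ∈ T j, w = .a i := by
  obtain ⟨⟨hrefl, hsymm, htri⟩, ⟨-, hxb, hzy, -, hzu, hau, -, hbh⟩, -⟩ := id hd
  have hk : (k : ℝ) + 1 ≤ L := by exact_mod_cast k.isLt
  have hj : ∀ j : Fin m, (j : ℝ) + 1 ≤ m := fun j => by exact_mod_cast j.isLt
  have hxb' : d (.x k) (.b j) < 22 := by nlinarith [hxb k j, hj j]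
  have hxu := le_dist_x_u hd hε k
  have hxh := le_dist_x_h hd hε k
  -- each other `w` has a witness `r ∈ D(x_k, b_j)` (a copy `x k'`, `u` or `h`) that is no
  -- farther from `w` than `b j`
  cases w with
  | x k' =>
    by_cases hk' : k' = k
    · exact .inl (hk' ▸ rfl)
    have := lt_of_mem_iBGPSafeSet hw (by simp) (r := .x k')
      (by linarith [le_dist_x_x hd hε hk'])
    linarith [hd.1.nonneg (.x k') (.b j), hrefl (.x k')]
  | z =>
    have := lt_of_mem_iBGPSafeSet hw (by simp) (r := .u) (by linarith)
    linarith [le_dist_z_b hd hε j]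
  | y =>
    have := lt_of_mem_iBGPSafeSet hw (by simp) (r := .u) (by linarith)
    linarith [le_dist_y_b hd hε j, htri .y .z .u, hsymm .y .z]
  | u =>
    have := lt_of_mem_iBGPSafeSet hw (by simp) (r := .u) (by linarith)
    linarith [hd.1.nonneg .u (.b j), hrefl .u]
  | h =>
    have := lt_of_mem_iBGPSafeSet hw (by simp) (r := .h) (by linarith)
    linarith [hd.1.nonneg .h (.b j), hrefl .h]
  | a i =>
    by_cases hi : i ∈ T j
    · exact .inr (.inr ⟨i, hi, rfl⟩)
    have := lt_of_mem_iBGPSafeSet hw (by simp) (r := .u) (by linarith)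
    linarith [le_dist_a_b hd hε hi, hau i]
  | b j' =>
    by_cases hj' : j' = j
    · exact .inr (.inl (hj' ▸ rfl))
    have := lt_of_mem_iBGPSafeSet hw (by simpa using hj') (r := .h) (by linarith)
    nlinarith [le_dist_b_b hd hε hj', hbh j', hj j']


lemma exists_edge_of_iBGPFeasible (hd : IsGadgetSPMetric T ε d) (hε : 0 ≤ ε)
    (hsmall : ((L : ℝ) + m) * ε < 1 / 2) {E : Finset (Sym2 (GV L n m))}
    (hE : iBGPFeasible d ↑E) (k : Fin L) (j : Fin m) :
    s(.x k, .b j) ∈ E ∨ ∃ i ∈ T j, s(.x k, .a i) ∈ E := by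
  obtain ⟨w, hw⟩ := hE (.x k) (.b j)
  have hnil : ¬ w.Nil := SimpleGraph.Walk.not_nil_of_ne (by simp)
  obtain ⟨hvE, hvx⟩ := (SimpleGraph.fromEdgeSet_adj _).mp (w.adj_penultimate hnil)
  rw [Sym2.eq_swap] at hvE
  rcases mem_iBGPSafeSet_x_b hd hε hsmall (hw _ (w.getVert_mem_support _))
    with hv | hv | ⟨i, hi, hv⟩
  · exact absurd hv hvx
  · exact .inl (hv ▸ hvE)
  · exact .inr ⟨i, hi, hv ▸ hvE⟩

def copyLabel (c : Fin m → Fin n) : GV L n m → GV L n m → Option (Fin L × Fin n)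
  | .x k, .a i | .a i, .x k => some (k, i)
  | .x k, .b j | .b j, .x k => some (k, c j)
  | _, _ => none

lemma copyLabel_comm (c : Fin m → Fin n) (p q : GV L n m) :
    copyLabel c p q = copyLabel c q p := by
  cases p <;> cases q <;> rfl

def copyLabels (c : Fin m → Fin n) (E : Finset (Sym2 (GV L n m))) : Finset (Fin L × Fin n) :=
  (E.image (Sym2.lift ⟨copyLabel c, copyLabel_comm c⟩)).eraseNone

lemma card_copyLabels_le (c : Fin m → Fin n) (E : Finset (Sym2 (GV L n m))) :
    (copyLabels c E).card ≤ E.card :=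
  (Finset.card_eraseNone_le _).trans Finset.card_image_le

lemma isHittingSet_copyLabels {c : Fin m → Fin n} (hc : ∀ j, c j ∈ T j)
    {E : Finset (Sym2 (GV L n m))}
    (hE : ∀ k j, s(.x k, .b j) ∈ E ∨ ∃ i ∈ T j, s(.x k, .a i) ∈ E) (k : Fin L) :
    IsHittingSet T (((copyLabels c E).filter (·.1 = k)).image Prod.snd) := by
  intro j
  have hmem : ∀ {i v}, s(.x k, v) ∈ E → copyLabel c (.x k) v = some (k, i) →
      i ∈ ((copyLabels c E).filter (·.1 = k)).image Prod.snd := by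
    intro i v he hi
    refine Finset.mem_image.mpr ⟨(k, i), Finset.mem_filter.mpr ⟨?_, rfl⟩, rfl⟩
    exact Finset.mem_eraseNone.mpr (Finset.mem_image.mpr ⟨_, he, hi⟩)
  rcases hE k j with he | ⟨i, hi, he⟩
  · exact ⟨c j, hmem he rfl, hc j⟩
  · exact ⟨i, hmem he rfl, hi⟩

lemma mul_le_card_of_forall_exists_edge {h : ℕ}
    (hmin : ∀ Hs : Finset (Fin n), IsHittingSet T Hs → h ≤ Hs.card)
    {c : Fin m → Fin n} (hc : ∀ j, c j ∈ T j) {E : Finset (Sym2 (GV L n m))}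
    (hE : ∀ k j, s(.x k, .b j) ∈ E ∨ ∃ i ∈ T j, s(.x k, .a i) ∈ E) : L * h ≤ E.card :=
  calc L * h = h * (Finset.univ : Finset (Fin L)).card := by simp [mul_comm]
    _ ≤ (copyLabels c E).card :=
      Finset.mul_card_image_le_card_of_maps_to (f := Prod.fst) (fun _ _ => Finset.mem_univ _) h
        fun k _ => (hmin _ (isHittingSet_copyLabels hc hE k)).trans Finset.card_image_le
    _ ≤ E.card := card_copyLabels_le c E

end Gadget

theorem stmt6_general (L n m : ℕ) (T : Fin m → Finset (Fin n))
    (hstar : ℕ)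
    (hstar_ex : ∃ Hs : Finset (Fin n), IsHittingSet T Hs ∧ Hs.card = hstar)
    (hstar_min : ∀ Hs : Finset (Fin n), IsHittingSet T Hs → hstar ≤ Hs.card) :
    ∃ ε₀ : ℝ, 0 < ε₀ ∧ ∀ ε : ℝ, 0 < ε → ε < ε₀ →
      ∀ d : GV L n m → GV L n m → ℝ, IsGadgetSPMetric T ε d →
        ∀ E : Finset (Sym2 (GV L n m)), iBGPFeasible d ↑E →
          L * hstar ≤ E.card := by
  obtain ⟨Hs, hHs, -⟩ := hstar_ex
  choose c hc using fun j => (hHs j).imp fun _ hi => hi.2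
  refine ⟨1 / (2 * (L + m + 1)), by positivity, fun ε hε hεlt d hd E hE => ?_⟩
  have hsmall : ((L : ℝ) + m) * ε < 1 / 2 := by
    rw [lt_div_iff₀ (by positivity)] at hεlt
    nlinarith
  exact mul_le_card_of_forall_exists_edge hstar_min hc
    (exists_edge_of_iBGPFeasible hd hε.le hsmall hE)

/-- In the duplicated gadget with `ℓ` copies of `x` (with sufficiently small
`ε > 0` and `d` the induced shortest-path metric), any feasible iBGP edge set
has at least `ℓ · h*` edges, where `h*` is the minimum hitting set size. -/
theorem stmt6 (L n m : ℕ) (hL : 1 ≤ L) (T : Fin m → Finset (Fin n))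
    (hstar : ℕ)
    (hstar_ex : ∃ Hs : Finset (Fin n), IsHittingSet T Hs ∧ Hs.card = hstar)
    (hstar_min : ∀ Hs : Finset (Fin n), IsHittingSet T Hs → hstar ≤ Hs.card) :
    ∃ ε₀ : ℝ, 0 < ε₀ ∧ ∀ ε : ℝ, 0 < ε → ε < ε₀ →
      ∀ d : GV L n m → GV L n m → ℝ, IsGadgetSPMetric T ε d →
        ∀ E : Finset (Sym2 (GV L n m)), iBGPFeasible d ↑E →
          L * hstar ≤ E.card :=
  stmt6_general L n m T hstar hstar_ex hstar_min
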